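/- arXiv:2108.11241 — 2 statements merged into one kernel-verified Lean document; each statement's English description precedes it below -/
import Mathlib

section
/- Let A be a commutative ring. Then A is a GE₂-ring (i.e. GE₂(A) = GL₂(A)) if and only if the graph Γ(A) is connected. -/
open Matrix

/-- A row `(a,b) ∈ A²` is unimodular if `∃ r s, r*a + s*b = 1`. -/
def IsUnimod {A : Type*} [CommRing A] (v : Fin 2 → A) : Prop :=
  ∃ r s : A, r * v 0 + s * v 1 = 1

/-- Unimodular rows of length 2. -/
abbrev UnimodRow (A : Type*) [CommRing A] := {v : Fin 2 → A // IsUnimod v}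

/-- Two unimodular rows are equivalent if they differ by multiplication by a unit. -/
instance vertexSetoid (A : Type*) [CommRing A] : Setoid (UnimodRow A) where
  r v w := ∃ u : Aˣ, (u : A) • v.1 = w.1
  iseqv := by
    refine ⟨fun v => ⟨1, by simp⟩, ?_, ?_⟩
    · rintro v w ⟨u, h⟩
      exact ⟨u⁻¹, by rw [← h, smul_smul, Units.inv_mul, one_smul]⟩
    · rintro v w z ⟨u, h⟩ ⟨u', h'⟩
      exact ⟨u' * u, by rw [← h', ← h, smul_smul, ← Units.val_mul]⟩

/-- The vertices of the graph Γ(A): unimodular rows up to multiplication by a unit. -/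
def Vertex (A : Type*) [CommRing A] := Quotient (vertexSetoid A)

/-- The graph Γ(A). -/
def GammaGraph (A : Type*) [CommRing A] : SimpleGraph (Vertex A) where
  Adj x y := x ≠ y ∧ ∃ v w : UnimodRow A, x = ⟦v⟧ ∧ y = ⟦w⟧ ∧
    IsUnit (v.1 0 * w.1 1 - v.1 1 * w.1 0)
  symm := by
    constructor
    rintro x y ⟨hne, v, w, hx, hy, hd⟩
    refine ⟨hne.symm, w, v, hy, hx, ?_⟩
    have h : w.1 0 * v.1 1 - w.1 1 * v.1 0 = -(v.1 0 * w.1 1 - v.1 1 * w.1 0) := by ring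
    rw [h]
    exact hd.neg
  loopless := ⟨fun x h => h.1 rfl⟩

theorem isUnimod_vecMul {A : Type*} [CommRing A] {v : Fin 2 → A} (h : IsUnimod v)
    (M : GL (Fin 2) A) : IsUnimod (vecMul v (M : Matrix (Fin 2) (Fin 2) A)) := by
  obtain ⟨r, s, hrs⟩ := h
  set w : Fin 2 → A := ((M⁻¹ : GL (Fin 2) A) : Matrix (Fin 2) (Fin 2) A) *ᵥ ![r, s] with hw
  refine ⟨w 0, w 1, ?_⟩
  have h1 : vecMul v (M : Matrix (Fin 2) (Fin 2) A) ⬝ᵥ w = v ⬝ᵥ ![r, s] := by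
    rw [hw, ← dotProduct_mulVec, mulVec_mulVec, Units.mul_inv, one_mulVec]
  simp only [dotProduct, Fin.sum_univ_two] at h1
  simp only [Matrix.cons_val_zero, Matrix.cons_val_one, Matrix.head_cons] at h1
  linear_combination h1 + hrs

/-- The right action of GL₂(A) on the vertices of Γ(A). -/
def vertexMul {A : Type*} [CommRing A] (x : Vertex A) (M : GL (Fin 2) A) : Vertex A :=
  Quotient.map (fun v => ⟨vecMul v.1 (M : Matrix (Fin 2) (Fin 2) A), isUnimod_vecMul v.2 M⟩)
    (by
      rintro v w ⟨u, h⟩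
      refine ⟨u, ?_⟩
      show (u : A) • (vecMul v.1 (M : Matrix (Fin 2) (Fin 2) A)) =
        vecMul w.1 (M : Matrix (Fin 2) (Fin 2) A)
      rw [← h, Matrix.smul_vecMul]) x

/-- The vertex ∞ = [(1,0)]. -/
def vInf (A : Type*) [CommRing A] : Vertex A := ⟦⟨![1, 0], ⟨1, 0, by norm_num⟩⟩⟧

/-- The vertex 0 = [(0,1)]. -/
def vZero (A : Type*) [CommRing A] : Vertex A := ⟦⟨![0, 1], ⟨0, 1, by norm_num⟩⟩⟧

/-- The vertex 1 = [(1,1)]. -/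
def vOne (A : Type*) [CommRing A] : Vertex A := ⟦⟨![1, 1], ⟨1, 0, by norm_num⟩⟩⟧
open Matrix

/-- E(a) = [[a,1],[-1,0]] as an element of GL₂. -/
def Egl {A : Type*} [CommRing A] (a : A) : GL (Fin 2) A :=
  ⟨!![a, 1; -1, 0], !![0, -1; 1, a],
    by ext i j; fin_cases i <;> fin_cases j <;> simp [Matrix.mul_apply, Fin.sum_univ_two],
    by ext i j; fin_cases i <;> fin_cases j <;> simp [Matrix.mul_apply, Fin.sum_univ_two]⟩

/-- S(a) = [[a,1],[1,0]] as an element of GL₂. -/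
def Sgl {A : Type*} [CommRing A] (a : A) : GL (Fin 2) A :=
  ⟨!![a, 1; 1, 0], !![0, 1; 1, -a],
    by ext i j; fin_cases i <;> fin_cases j <;> simp [Matrix.mul_apply, Fin.sum_univ_two],
    by ext i j; fin_cases i <;> fin_cases j <;> simp [Matrix.mul_apply, Fin.sum_univ_two]⟩

/-- The elementary matrix E₁₂(a) = [[1,a],[0,1]] in GL₂. -/
def E12gl {A : Type*} [CommRing A] (a : A) : GL (Fin 2) A :=
  ⟨!![1, a; 0, 1], !![1, -a; 0, 1],
    by ext i j; fin_cases i <;> fin_cases j <;> simp [Matrix.mul_apply, Fin.sum_univ_two],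
    by ext i j; fin_cases i <;> fin_cases j <;> simp [Matrix.mul_apply, Fin.sum_univ_two]⟩

/-- The elementary matrix E₂₁(a) = [[1,0],[a,1]] in GL₂. -/
def E21gl {A : Type*} [CommRing A] (a : A) : GL (Fin 2) A :=
  ⟨!![1, 0; a, 1], !![1, 0; -a, 1],
    by ext i j; fin_cases i <;> fin_cases j <;> simp [Matrix.mul_apply, Fin.sum_univ_two],
    by ext i j; fin_cases i <;> fin_cases j <;> simp [Matrix.mul_apply, Fin.sum_univ_two]⟩

/-- GE₂(A): the subgroup of GL₂(A) generated by the elementary matrices and the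
invertible diagonal matrices. -/
def GE2 (A : Type*) [CommRing A] : Subgroup (GL (Fin 2) A) :=
  Subgroup.closure
    ({M | ∃ a : A, M = E12gl a} ∪ {M | ∃ a : A, M = E21gl a} ∪
      {M | (M : Matrix (Fin 2) (Fin 2) A) 0 1 = 0 ∧ (M : Matrix (Fin 2) (Fin 2) A) 1 0 = 0})

/-- Given `f : A → G` and a tuple `(a 0, …, a (n-1))`, the product
`f (a (n-1)) * ⋯ * f (a 1) * f (a 0)` (rightmost factor first). -/
def wordProd {A : Type*} {G : Type*} [Monoid G] (f : A → G) :
    {n : ℕ} → (Fin n → A) → G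
  | 0, _ => 1
  | n + 1, a => f (a (Fin.last n)) * wordProd f (fun j : Fin n => a j.castSucc)

/-!
`GL₂(A)` acts on `Γ(A)` from the right by graph automorphisms, transitively on vertices and on
oriented edges, and the stabiliser of `∞ = [(1,0)]` is the group of lower triangular matrices,
which lies in `GE₂(A)`.

If `GE₂(A) = GL₂(A)`, every vertex is `∞·M` with `M` a word in the generators, and each generator
keeps `∞` in its component: `E₁₂(a)` sends it to `[(1,a)]`, a neighbour of `0 = [(0,1)]`, and the
lower triangular generators fix it.

Conversely, the orbit `∞·GE₂(A)` is closed under adjacency: if `∞·M ~ y` and `P` sends the edge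
`(∞, 0)` to `(∞·M, y)`, then `P M⁻¹` fixes `∞`, so `P ∈ GE₂(A)`, and `y = ∞·(S P)` with
`S = [[0,1],[1,0]] ∈ GE₂(A)`. If `Γ(A)` is connected the orbit is everything, so for any
`N ∈ GL₂(A)` some `M ∈ GE₂(A)` has `∞·N = ∞·M`, and `N M⁻¹` fixes `∞`.
-/

lemma SimpleGraph.Reachable.mem_of_adj_closed {V : Type*} {G : SimpleGraph V} {S : Set V}
    (hS : ∀ ⦃x y⦄, G.Adj x y → x ∈ S → y ∈ S) {x y : V} (h : G.Reachable x y) (hx : x ∈ S) :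
    y ∈ S := by
  rw [SimpleGraph.reachable_iff_reflTransGen] at h
  induction h with
  | refl => exact hx
  | tail _ hab ih => exact hS hab ih

section GammaGraph

variable {A : Type*} [CommRing A]

lemma vecMul_apply_fin_two (v : Fin 2 → A) (M : Matrix (Fin 2) (Fin 2) A) (j : Fin 2) :
    (v ᵥ* M) j = v 0 * M 0 j + v 1 * M 1 j := by
  simp [vecMul, dotProduct, Fin.sum_univ_two]

lemma det_rows_vecMul (v w : Fin 2 → A) (M : Matrix (Fin 2) (Fin 2) A) :
    (v ᵥ* M) 0 * (w ᵥ* M) 1 - (v ᵥ* M) 1 * (w ᵥ* M) 0 = (v 0 * w 1 - v 1 * w 0) * M.det := by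
  simp only [vecMul_apply_fin_two, det_fin_two]
  ring

lemma exists_GL_rows {v w : Fin 2 → A} (h : IsUnit (v 0 * w 1 - v 1 * w 0)) :
    ∃ P : GL (Fin 2) A,
      (P : Matrix (Fin 2) (Fin 2) A) 0 = v ∧ (P : Matrix (Fin 2) (Fin 2) A) 1 = w := by
  have hP : IsUnit (Matrix.of ![v, w]) := by
    rw [Matrix.isUnit_iff_isUnit_det, det_fin_two]
    simpa using h
  exact ⟨hP.unit, rfl, rfl⟩

lemma vertexMul_mk (v : UnimodRow A) (M : GL (Fin 2) A) :
    vertexMul ⟦v⟧ M = ⟦⟨v.1 ᵥ* (M : Matrix (Fin 2) (Fin 2) A), isUnimod_vecMul v.2 M⟩⟧ := rfl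

lemma vertexMul_one (x : Vertex A) : vertexMul x 1 = x := by
  induction x using Quotient.inductionOn with
  | h v => exact congrArg _ (Subtype.ext (vecMul_one v.1))

lemma vertexMul_mul (x : Vertex A) (M N : GL (Fin 2) A) :
    vertexMul x (M * N) = vertexMul (vertexMul x M) N := by
  induction x using Quotient.inductionOn with
  | h v => exact congrArg _ (Subtype.ext (vecMul_vecMul v.1 _ _).symm)

lemma vertexMul_vertexMul_inv (x : Vertex A) (M : GL (Fin 2) A) :
    vertexMul (vertexMul x M) M⁻¹ = x := by
  rw [← vertexMul_mul, mul_inv_cancel, vertexMul_one]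

lemma vertexMul_injective (M : GL (Fin 2) A) : Function.Injective (vertexMul · M) :=
  Function.LeftInverse.injective (g := (vertexMul · M⁻¹)) fun x => vertexMul_vertexMul_inv x M

lemma mk_eq_mk_of_smul {v w : UnimodRow A} (u : Aˣ) (h : (u : A) • v.1 = w.1) :
    (⟦v⟧ : Vertex A) = ⟦w⟧ :=
  Quotient.sound ⟨u, h⟩

lemma vInf_vertexMul_eq_mk {M : GL (Fin 2) A} {v : UnimodRow A}
    (h : (M : Matrix (Fin 2) (Fin 2) A) 0 = v.1) : vertexMul (vInf A) M = ⟦v⟧ := by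
  refine congrArg _ (Subtype.ext ?_)
  rw [← h]
  ext j
  simp [vecMul_apply_fin_two]

lemma vZero_vertexMul_eq_mk {M : GL (Fin 2) A} {v : UnimodRow A}
    (h : (M : Matrix (Fin 2) (Fin 2) A) 1 = v.1) : vertexMul (vZero A) M = ⟦v⟧ := by
  refine congrArg _ (Subtype.ext ?_)
  rw [← h]
  ext j
  simp [vecMul_apply_fin_two]

lemma exists_vInf_vertexMul_eq (x : Vertex A) : ∃ P : GL (Fin 2) A, vertexMul (vInf A) P = x := by
  induction x using Quotient.inductionOn with
  | h v =>
    obtain ⟨r, s, hrs⟩ := v.2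
    have hdet : v.1 0 * ![-s, r] 1 - v.1 1 * ![-s, r] 0 = 1 := by
      simp only [Matrix.cons_val_zero, Matrix.cons_val_one]
      linear_combination hrs
    obtain ⟨P, hP, -⟩ := exists_GL_rows (hdet ▸ isUnit_one)
    exact ⟨P, vInf_vertexMul_eq_mk hP⟩

lemma exists_vertexMul_eq_of_adj {x y : Vertex A} (h : (GammaGraph A).Adj x y) :
    ∃ P : GL (Fin 2) A, vertexMul (vInf A) P = x ∧ vertexMul (vZero A) P = y := by
  obtain ⟨-, v, w, rfl, rfl, hdet⟩ := h
  obtain ⟨P, hv, hw⟩ := exists_GL_rows hdet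
  exact ⟨P, vInf_vertexMul_eq_mk hv, vZero_vertexMul_eq_mk hw⟩

lemma reachable_mk_of_isUnit {v w : UnimodRow A} (h : IsUnit (v.1 0 * w.1 1 - v.1 1 * w.1 0)) :
    (GammaGraph A).Reachable ⟦v⟧ ⟦w⟧ := by
  by_cases hvw : (⟦v⟧ : Vertex A) = ⟦w⟧
  · exact hvw ▸ SimpleGraph.Reachable.refl _
  · exact SimpleGraph.Adj.reachable ⟨hvw, v, w, rfl, rfl, h⟩

def vertexMulHom (M : GL (Fin 2) A) : GammaGraph A →g GammaGraph A where
  toFun x := vertexMul x M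
  map_rel' := by
    rintro _ _ ⟨hne, v, w, rfl, rfl, hdet⟩
    refine ⟨(vertexMul_injective M).ne hne, _, _, vertexMul_mk v M, vertexMul_mk w M, ?_⟩
    rw [det_rows_vecMul]
    exact hdet.mul (isUnits_det_units M)

lemma SimpleGraph.Reachable.vertexMul {x y : Vertex A} (h : (GammaGraph A).Reachable x y)
    (M : GL (Fin 2) A) : (GammaGraph A).Reachable (vertexMul x M) (vertexMul y M) :=
  h.map (vertexMulHom M)

def componentStabilizer (x : Vertex A) : Subgroup (GL (Fin 2) A) where
  carrier := {M | (GammaGraph A).Reachable x (vertexMul x M)}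
  one_mem' := by
    simp only [Set.mem_ofPred_eq, vertexMul_one, SimpleGraph.Reachable.refl]
  mul_mem' {M N} hM hN := by
    simp only [Set.mem_ofPred_eq, vertexMul_mul] at hM hN ⊢
    exact hN.trans (hM.vertexMul N)
  inv_mem' {M} hM := by
    have := (hM.vertexMul M⁻¹).symm
    rwa [vertexMul_vertexMul_inv] at this

lemma isUnit_apply_zero_zero {T : GL (Fin 2) A} (h01 : (T : Matrix (Fin 2) (Fin 2) A) 0 1 = 0) :
    IsUnit ((T : Matrix (Fin 2) (Fin 2) A) 0 0) := by
  have hdet := isUnits_det_units T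
  rw [det_fin_two, h01, zero_mul, sub_zero] at hdet
  exact isUnit_of_mul_isUnit_left hdet

lemma vInf_vertexMul_eq_vInf_iff {T : GL (Fin 2) A} :
    vertexMul (vInf A) T = vInf A ↔ (T : Matrix (Fin 2) (Fin 2) A) 0 1 = 0 := by
  constructor
  · intro h
    obtain ⟨u, hu⟩ := Quotient.exact h
    have h1 := congrFun hu 1
    simp only [Pi.smul_apply, smul_eq_mul, vecMul_apply_fin_two] at h1
    simpa using h1
  · intro h01
    refine (mk_eq_mk_of_smul (isUnit_apply_zero_zero h01).unit ?_).symm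
    ext j
    fin_cases j <;> simp [vecMul_apply_fin_two, h01]

lemma E12gl_mem_GE2 (a : A) : E12gl a ∈ GE2 A :=
  Subgroup.subset_closure (Or.inl (Or.inl ⟨a, rfl⟩))

lemma E21gl_mem_GE2 (a : A) : E21gl a ∈ GE2 A :=
  Subgroup.subset_closure (Or.inl (Or.inr ⟨a, rfl⟩))

lemma mem_GE2_of_apply_zero_one_eq_zero {T : GL (Fin 2) A}
    (h01 : (T : Matrix (Fin 2) (Fin 2) A) 0 1 = 0) : T ∈ GE2 A := by
  have hu := isUnit_apply_zero_zero h01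
  set c := (T : Matrix (Fin 2) (Fin 2) A) 1 0 * ↑hu.unit⁻¹
  have hinv : (((E21gl c)⁻¹ : GL (Fin 2) A) : Matrix (Fin 2) (Fin 2) A) = !![1, 0; -c, 1] := rfl
  have hT : T = E21gl c * ((E21gl c)⁻¹ * T) := by group
  rw [hT]
  refine (GE2 A).mul_mem (E21gl_mem_GE2 c) (Subgroup.subset_closure (Or.inr ⟨?_, ?_⟩))
  · simp [hinv, Matrix.mul_apply, Fin.sum_univ_two, h01]
  · simp only [Units.val_mul, hinv, Matrix.mul_apply, Fin.sum_univ_two]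
    simp [c, mul_assoc, hu.val_inv_mul]

lemma mem_GE2_of_vInf_vertexMul_eq {M N : GL (Fin 2) A} (hN : N ∈ GE2 A)
    (h : vertexMul (vInf A) M = vertexMul (vInf A) N) : M ∈ GE2 A := by
  have hMN : M * N⁻¹ ∈ GE2 A := by
    refine mem_GE2_of_apply_zero_one_eq_zero (vInf_vertexMul_eq_vInf_iff.mp ?_)
    rw [vertexMul_mul, h, vertexMul_vertexMul_inv]
  simpa using (GE2 A).mul_mem hMN hN

lemma vInf_vertexMul_Sgl_zero : vertexMul (vInf A) (Sgl 0) = vZero A :=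
  vInf_vertexMul_eq_mk rfl

lemma Sgl_zero_mem_GE2 : Sgl (0 : A) ∈ GE2 A := by
  refine mem_GE2_of_vInf_vertexMul_eq ((GE2 A).mul_mem (E12gl_mem_GE2 1) (E21gl_mem_GE2 (-1))) ?_
  rw [vInf_vertexMul_Sgl_zero]
  refine (vInf_vertexMul_eq_mk ?_).symm
  ext j
  fin_cases j <;> simp [E12gl, E21gl, Matrix.mul_apply, Fin.sum_univ_two]

lemma GE2_le_componentStabilizer_vInf : GE2 A ≤ componentStabilizer (vInf A) := by
  refine (Subgroup.closure_le _).mpr ?_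
  rintro M ((⟨a, rfl⟩ | ⟨a, rfl⟩) | ⟨h01, -⟩)
  · show (GammaGraph A).Reachable (vInf A) (vertexMul (vInf A) (E12gl a))
    rw [vInf_vertexMul_eq_mk (v := ⟨![1, a], 1, 0, by simp⟩) rfl]
    exact (reachable_mk_of_isUnit (w := ⟨![0, 1], 0, 1, by simp⟩) (by simp)).trans
      (reachable_mk_of_isUnit (by simp))
  · show (GammaGraph A).Reachable (vInf A) (vertexMul (vInf A) (E21gl a))
    rw [vInf_vertexMul_eq_vInf_iff.mpr rfl]
  · show (GammaGraph A).Reachable (vInf A) (vertexMul (vInf A) M)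
    rw [vInf_vertexMul_eq_vInf_iff.mpr h01]

lemma exists_GE2_vInf_vertexMul_eq_of_adj {x y : Vertex A} (hxy : (GammaGraph A).Adj x y)
    {M : GL (Fin 2) A} (hM : M ∈ GE2 A) (hx : vertexMul (vInf A) M = x) :
    ∃ N ∈ GE2 A, vertexMul (vInf A) N = y := by
  obtain ⟨P, hPx, hPy⟩ := exists_vertexMul_eq_of_adj hxy
  have hP : P ∈ GE2 A := mem_GE2_of_vInf_vertexMul_eq hM (hPx.trans hx.symm)
  refine ⟨Sgl 0 * P, (GE2 A).mul_mem Sgl_zero_mem_GE2 hP, ?_⟩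
  rw [vertexMul_mul, vInf_vertexMul_Sgl_zero, hPy]

theorem connected_of_GE2_eq_top (h : GE2 A = ⊤) : (GammaGraph A).Connected := by
  refine (SimpleGraph.connected_iff_exists_forall_reachable _).mpr ⟨vInf A, fun x => ?_⟩
  obtain ⟨P, rfl⟩ := exists_vInf_vertexMul_eq x
  exact GE2_le_componentStabilizer_vInf (h ▸ Subgroup.mem_top P)

theorem GE2_eq_top_of_preconnected (h : (GammaGraph A).Preconnected) : GE2 A = ⊤ := by
  refine eq_top_iff.mpr fun N _ => ?_
  let orbit : Set (Vertex A) := {x | ∃ M ∈ GE2 A, vertexMul (vInf A) M = x}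
  have horbit : vertexMul (vInf A) N ∈ orbit :=
    (h _ _).mem_of_adj_closed (S := orbit)
      (fun _ _ hxy ⟨_, hM, hx⟩ => exists_GE2_vInf_vertexMul_eq_of_adj hxy hM hx)
      ⟨1, (GE2 A).one_mem, vertexMul_one _⟩
  obtain ⟨M, hM, hMN⟩ := horbit
  exact mem_GE2_of_vInf_vertexMul_eq hM hMN.symm

end GammaGraph

/-- A is a GE₂-ring iff the graph Γ(A) is connected. -/
theorem stmt7 (A : Type*) [CommRing A] :
    GE2 A = ⊤ ↔ (GammaGraph A).Connected :=
  ⟨connected_of_GE2_eq_top, fun h => GE2_eq_top_of_preconnected h.preconnected⟩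
end

section
/- Let A be a commutative ring, a ∈ A, and β = β(u,b) ∈ 𝔹 ⊆ C(A) with unit u = u(β). Then ε(a·β) = h(u) ε(a) β in C(A), where a·β := au² + bu ∈ A. -/
open Matrix

/-- The word `h(u) = ε(-u)ε(-u⁻¹)ε(-u)` in the free group on the symbols `ε(a)`, `a ∈ A`. -/
def hFree {A : Type*} [CommRing A] (u : Aˣ) : FreeGroup A :=
  FreeGroup.of (-(u : A)) * FreeGroup.of (-((u⁻¹ : Aˣ) : A)) * FreeGroup.of (-(u : A))

/-- The defining relations of Cohn's group C(A). -/
def CRels (A : Type*) [CommRing A] : Set (FreeGroup A) :=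
  {x | ∃ u v : Aˣ, x = hFree u * hFree v * (hFree (u * v))⁻¹} ∪
  {x | ∃ a b : A, x = FreeGroup.of a * FreeGroup.of (0 : A) * FreeGroup.of b *
      (hFree (-1) * FreeGroup.of (a + b))⁻¹} ∪
  {x | ∃ (u : Aˣ) (a : A), x = hFree u * FreeGroup.of a * hFree u *
      (FreeGroup.of ((u : A) ^ 2 * a))⁻¹}

/-- Cohn's group C(A), presented by generators ε(a), a ∈ A, and the three families of
relations h(u)h(v) = h(uv), ε(a)ε(0)ε(b) = h(-1)ε(a+b), h(u)ε(a)h(u) = ε(u²a). -/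
abbrev CGroup (A : Type*) [CommRing A] := PresentedGroup (CRels A)

/-- The generator ε(a) of C(A). -/
def epsC {A : Type*} [CommRing A] (a : A) : CGroup A := PresentedGroup.of a

/-- h(u) = ε(-u)ε(-u⁻¹)ε(-u) in C(A). -/
def hC {A : Type*} [CommRing A] (u : Aˣ) : CGroup A :=
  epsC (-(u : A)) * epsC (-((u⁻¹ : Aˣ) : A)) * epsC (-(u : A))

/-- y(a) = ε(0)³ε(a) in C(A). -/
def yC {A : Type*} [CommRing A] (a : A) : CGroup A := (epsC (0 : A)) ^ 3 * epsC a

/-- ȳ(a) = ε(-a)ε(0)³ in C(A). -/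
def ybarC {A : Type*} [CommRing A] (a : A) : CGroup A := epsC (-a) * (epsC (0 : A)) ^ 3

/-- β(u,a) = h(u)y(ua) in C(A). -/
def betaC {A : Type*} [CommRing A] (u : Aˣ) (a : A) : CGroup A := hC u * yC ((u : A) * a)

/-- E(a) = [[a,1],[-1,0]] as an element of SL₂. -/
def ESL {A : Type*} [CommRing A] (a : A) : Matrix.SpecialLinearGroup (Fin 2) A :=
  ⟨!![a, 1; -1, 0], by simp [Matrix.det_fin_two_of]⟩

/-- D(u) = diag(u, u⁻¹) as an element of SL₂. -/
def DSL {A : Type*} [CommRing A] (u : Aˣ) : Matrix.SpecialLinearGroup (Fin 2) A :=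
  ⟨!![(u : A), 0; 0, ((u⁻¹ : Aˣ) : A)], by simp [Matrix.det_fin_two_of]⟩

theorem ESL_h {A : Type*} [CommRing A] (u : Aˣ) :
    ESL (-(u : A)) * ESL (-((u⁻¹ : Aˣ) : A)) * ESL (-(u : A)) = DSL u := by
  apply Subtype.ext
  show (!![-(u:A), 1; -1, 0] * !![-((u⁻¹:Aˣ):A), 1; -1, 0]) * !![-(u:A), 1; -1, 0] = _
  ext i j
  fin_cases i <;> fin_cases j <;>
    simp [DSL, Matrix.mul_apply, Fin.sum_univ_two]

theorem DSL_mul {A : Type*} [CommRing A] (u v : Aˣ) : DSL u * DSL v = DSL (u * v) := by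
  apply Subtype.ext
  show (!![(u:A), 0; 0, ((u⁻¹:Aˣ):A)] * !![(v:A), 0; 0, ((v⁻¹:Aˣ):A)]) = _
  ext i j
  fin_cases i <;> fin_cases j <;>
    simp [DSL, Matrix.mul_apply, Fin.sum_univ_two, mul_comm]

theorem ESL_rel2 {A : Type*} [CommRing A] (a b : A) :
    ESL a * ESL (0 : A) * ESL b = DSL (-1) * ESL (a + b) := by
  apply Subtype.ext
  show (!![a, 1; -1, 0] * !![(0:A), 1; -1, 0]) * !![b, 1; -1, 0] = _
  change _ = (DSL (-1 : Aˣ)).1 * (ESL (a + b)).1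
  ext i j
  fin_cases i <;> fin_cases j <;>
    simp [DSL, ESL, Matrix.mul_apply, Fin.sum_univ_two]

theorem ESL_rel3 {A : Type*} [CommRing A] (u : Aˣ) (a : A) :
    DSL u * ESL a * DSL u = ESL ((u : A) ^ 2 * a) := by
  apply Subtype.ext
  show (!![(u:A), 0; 0, ((u⁻¹:Aˣ):A)] * !![a, 1; -1, 0]) * !![(u:A), 0; 0, ((u⁻¹:Aˣ):A)] = _
  ext i j
  fin_cases i <;> fin_cases j <;>
    simp [ESL, Matrix.mul_apply, Fin.sum_univ_two] <;> ring

theorem lift_hFree {A : Type*} [CommRing A] (u : Aˣ) :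
    FreeGroup.lift (fun a : A => ESL a) (hFree u) = DSL u := by
  simp only [hFree, _root_.map_mul, FreeGroup.lift_apply_of]
  exact ESL_h u

theorem CRels_liftable {A : Type*} [CommRing A] :
    ∀ r ∈ CRels A, FreeGroup.lift (fun a : A => ESL a) r = 1 := by
  rintro r ((⟨u, v, rfl⟩ | ⟨a, b, rfl⟩) | ⟨u, a, rfl⟩)
  · rw [_root_.map_mul, _root_.map_mul, map_inv, lift_hFree, lift_hFree, lift_hFree, DSL_mul,
      mul_inv_cancel]
  · simp only [_root_.map_mul, map_inv, FreeGroup.lift_apply_of, lift_hFree]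
    rw [ESL_rel2, mul_inv_cancel]
  · simp only [_root_.map_mul, map_inv, FreeGroup.lift_apply_of, lift_hFree]
    rw [ESL_rel3, mul_inv_cancel]

/-- The homomorphism ψ : C(A) → SL₂(A) with ψ(ε(a)) = E(a). -/
def psiC (A : Type*) [CommRing A] : CGroup A →* Matrix.SpecialLinearGroup (Fin 2) A :=
  PresentedGroup.toGroup CRels_liftable

@[simp] theorem psiC_epsC {A : Type*} [CommRing A] (a : A) : psiC A (epsC a) = ESL a :=
  PresentedGroup.toGroup.of _

/-
Relation (2) with b = 0 and the relation h(-1)² = h(1) = 1 from (1) show that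
ε(c)ε(0)³ε(d) = ε(c + d), i.e. ε(c) y(d) = ε(c + d). Hence, by relation (3),
h(u) ε(a) β(u,b) = (h(u) ε(a) h(u)) y(ub) = ε(u²a) y(ub) = ε(u²a + ub).
-/

section CohnRelations

variable {A : Type*} [CommRing A]

theorem mk_of (a : A) : PresentedGroup.mk (CRels A) (FreeGroup.of a) = epsC a :=
  rfl

theorem mk_hFree (u : Aˣ) : PresentedGroup.mk (CRels A) (hFree u) = hC u := by
  simp only [hFree, map_mul, mk_of, hC]

theorem hC_mul (u v : Aˣ) : hC u * hC v = hC (u * v) := by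
  have h :=
    PresentedGroup.mk_eq_mk_of_mul_inv_mem (rels := CRels A) (Or.inl (Or.inl ⟨u, v, rfl⟩))
  simpa only [map_mul, mk_hFree, mk_of] using h

theorem epsC_mul_epsC_zero_mul_epsC (a b : A) :
    epsC a * epsC (0 : A) * epsC b = hC (-1) * epsC (a + b) := by
  have h :=
    PresentedGroup.mk_eq_mk_of_mul_inv_mem (rels := CRels A) (Or.inl (Or.inr ⟨a, b, rfl⟩))
  simpa only [map_mul, mk_hFree, mk_of] using h

theorem hC_mul_epsC_mul_hC (u : Aˣ) (a : A) :
    hC u * epsC a * hC u = epsC ((u : A) ^ 2 * a) := by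
  have h :=
    PresentedGroup.mk_eq_mk_of_mul_inv_mem (rels := CRels A) (Or.inr ⟨u, a, rfl⟩)
  simpa only [map_mul, mk_hFree, mk_of] using h

theorem hC_one : hC (1 : Aˣ) = 1 :=
  mul_eq_left.mp (by rw [hC_mul, mul_one] : hC (1 : Aˣ) * hC 1 = hC 1)

theorem hC_neg_one_mul_self : hC (-1 : Aˣ) * hC (-1) = 1 := by
  rw [hC_mul, neg_one_mul, neg_neg, hC_one]

theorem epsC_mul_yC (c d : A) : epsC c * yC d = epsC (c + d) :=
  calc epsC c * yC d
      = (epsC c * epsC 0 * epsC 0) * (epsC 0 * epsC d) := by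
        rw [yC, pow_three]; group
    _ = hC (-1) * (epsC c * epsC 0 * epsC d) := by
        rw [epsC_mul_epsC_zero_mul_epsC, add_zero]; group
    _ = epsC (c + d) := by
        rw [epsC_mul_epsC_zero_mul_epsC, ← mul_assoc, hC_neg_one_mul_self, one_mul]

end CohnRelations

/-- For a ∈ A and β = β(u,b) ∈ 𝔹 ⊆ C(A):
ε(a·β) = h(u) ε(a) β, where a·β = au² + bu. -/
theorem stmt13 (A : Type*) [CommRing A] (a b : A) (u : Aˣ) :
    epsC (a * (u : A) ^ 2 + b * (u : A)) = hC u * epsC a * betaC u b := by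
  calc epsC (a * (u : A) ^ 2 + b * (u : A))
      = epsC ((u : A) ^ 2 * a) * yC ((u : A) * b) := by rw [epsC_mul_yC]; congr 1; ring
    _ = hC u * epsC a * betaC u b := by rw [← hC_mul_epsC_mul_hC, betaC]; group
end
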